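/- arXiv:2402.02390 — 8 statements merged into one kernel-verified Lean document; each statement's English description precedes it below -/
import Mathlib

section
/- If C ⊆ {0,1,2}^n is a trifferent code (for every three distinct codewords x, y, z there is a coordinate i where {x(i), y(i), z(i)} = {0,1,2}), then |C| ≤ 2 · (3/2)^n. -/
/-- A code `C ⊆ {0,1,2}^n` is trifferent if any three distinct codewords
attain all three symbols in some coordinate. -/
def Trifferent {n : ℕ} (C : Finset (Fin n → Fin 3)) : Prop :=
  ∀ x ∈ C, ∀ y ∈ C, ∀ z ∈ C, x ≠ y → x ≠ z → y ≠ z →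
    ∃ i : Fin n, ({x i, y i, z i} : Set (Fin 3)) = Set.univ

lemma triple_ne_univ (a u v w : Fin 3) (hu : u ≠ a) (hv : v ≠ a) (hw : w ≠ a) :
    ({u, v, w} : Set (Fin 3)) ≠ Set.univ := by
  intro h
  have : a ∈ ({u, v, w} : Set (Fin 3)) := h ▸ Set.mem_univ a
  simp only [Set.mem_insert_iff, Set.mem_singleton_iff] at this
  rcases this with h1 | h1 | h1 <;> simp_all

lemma pair_ne_univ (u v : Fin 3) : ({u, u, v} : Set (Fin 3)) ≠ Set.univ := by
  obtain ⟨w, hw1, hw2⟩ : ∃ w : Fin 3, w ≠ u ∧ w ≠ v := by revert u v; decide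
  intro h
  have : w ∈ ({u, u, v} : Set (Fin 3)) := h ▸ Set.mem_univ w
  simp only [Set.mem_insert_iff, Set.mem_singleton_iff] at this
  rcases this with h1 | h1 | h1 <;> simp_all

theorem elias_bound {n : ℕ} (C : Finset (Fin n → Fin 3)) (hC : Trifferent C) :
    (C.card : ℝ) ≤ 2 * (3 / 2) ^ n := by
  induction n with
  | zero =>
    have h1 : C.card ≤ 1 := Finset.card_le_one.mpr fun a _ b _ => funext fun i => i.elim0
    simp only [pow_zero, mul_one]
    have : (C.card : ℝ) ≤ 1 := by exact_mod_cast h1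
    linarith
  | succ n ih =>
    obtain ⟨a, _, ha⟩ := Finset.exists_min_image (Finset.univ : Finset (Fin 3))
      (fun a => (C.filter (fun x => x 0 = a)).card) ⟨0, Finset.mem_univ 0⟩
    set C' := C.filter (fun x => ¬ (x 0 = a)) with hC'def
    have hsum : (C.filter (fun x => x 0 = a)).card + C'.card = C.card :=
      Finset.card_filter_add_card_filter_not (s := C) (p := fun x => x 0 = a)
    have hcardsum : C.card = ∑ b : Fin 3, (C.filter (fun x => x 0 = b)).card :=
      Finset.card_eq_sum_card_fiberwise (fun x _ => Finset.mem_univ (x 0))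
    have h3m : 3 * (C.filter (fun x => x 0 = a)).card ≤ C.card := by
      rw [hcardsum]
      calc 3 * (C.filter (fun x => x 0 = a)).card
          = ∑ _b : Fin 3, (C.filter (fun x => x 0 = a)).card := by
            simp [Finset.sum_const, mul_comm]
        _ ≤ _ := Finset.sum_le_sum fun b hb => ha b hb
    have hC'sub : C' ⊆ C := Finset.filter_subset _ _
    have hmemC' : ∀ x ∈ C', x ∈ C ∧ x 0 ≠ a := by
      intro x hx; exact Finset.mem_filter.mp hx
    obtain ⟨m, hm⟩ : ∃ m, (C.filter (fun x => x 0 = a)).card = m := ⟨_, rfl⟩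
    rw [hm] at hsum h3m
    clear_value C'
    clear hm hcardsum hC'def
    have hkey : 2 * C.card ≤ 3 * C'.card := by omega
    have hC'bound : (C'.card : ℝ) ≤ 2 * (3 / 2) ^ n := by
      by_cases hsmall : C'.card ≤ 2
      · have hp : (1 : ℝ) ≤ (3 / 2 : ℝ) ^ n := one_le_pow₀ (by norm_num)
        have : (C'.card : ℝ) ≤ 2 := by exact_mod_cast hsmall
        nlinarith
      · push_neg at hsmall
        set π : (Fin (n + 1) → Fin 3) → (Fin n → Fin 3) := fun x i => x i.succ with hπ
        have hinj : ∀ x ∈ C', ∀ y ∈ C', π x = π y → x = y := by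
          intro x hx y hy hxy
          by_contra hne
          have hcard2 : 1 ≤ ((C'.erase x).erase y).card := by
            have e1 : C'.card - 1 ≤ (C'.erase x).card := Finset.pred_card_le_card_erase
            have e2 : (C'.erase x).card - 1 ≤ ((C'.erase x).erase y).card :=
              Finset.pred_card_le_card_erase
            omega
          obtain ⟨z, hz⟩ := Finset.card_pos.mp
            (Nat.lt_of_lt_of_le Nat.zero_lt_one hcard2)
          have hzy : z ≠ y := (Finset.mem_erase.mp hz).1
          have hzx : z ≠ x := (Finset.mem_erase.mp (Finset.mem_erase.mp hz).2).1
          have hzC' : z ∈ C' := (Finset.mem_erase.mp (Finset.mem_erase.mp hz).2).2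
          obtain ⟨i, hi⟩ := hC x (hC'sub hx) y (hC'sub hy) z (hC'sub hzC')
            hne (fun h => hzx h.symm) (fun h => hzy h.symm)
          rcases Fin.eq_zero_or_eq_succ i with h0 | ⟨j, rfl⟩
          · subst h0
            exact triple_ne_univ a _ _ _ (hmemC' x hx).2 (hmemC' y hy).2 (hmemC' z hzC').2 hi
          · have hxy' : x j.succ = y j.succ := congrFun hxy j
            rw [hxy'] at hi
            exact pair_ne_univ _ _ hi
        set D := C'.image π with hD
        have hDcard : D.card = C'.card := Finset.card_image_of_injOn hinj
        have hDtriff : Trifferent D := by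
          intro px hpx py hpy pz hpz hxy hxz hyz
          obtain ⟨x, hx, rfl⟩ := Finset.mem_image.mp hpx
          obtain ⟨y, hy, rfl⟩ := Finset.mem_image.mp hpy
          obtain ⟨z, hz, rfl⟩ := Finset.mem_image.mp hpz
          obtain ⟨i, hi⟩ := hC x (hC'sub hx) y (hC'sub hy) z (hC'sub hz)
            (fun h => hxy (by rw [h])) (fun h => hxz (by rw [h])) (fun h => hyz (by rw [h]))
          rcases Fin.eq_zero_or_eq_succ i with h0 | ⟨j, rfl⟩
          · subst h0
            exact absurd hi
              (triple_ne_univ a _ _ _ (hmemC' x hx).2 (hmemC' y hy).2 (hmemC' z hz).2)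
          · exact ⟨j, hi⟩
        have := ih D hDtriff
        rw [hDcard] at this
        exact this
    have hcast : (C.card : ℝ) ≤ 3 / 2 * (C'.card : ℝ) := by
      have : ((2 * C.card : ℕ) : ℝ) ≤ ((3 * C'.card : ℕ) : ℝ) := Nat.cast_le.mpr hkey
      push_cast at this
      linarith
    calc (C.card : ℝ) ≤ 3 / 2 * (C'.card : ℝ) := hcast
      _ ≤ 3 / 2 * (2 * (3 / 2) ^ n) := by linarith [hC'bound]
      _ = 2 * (3 / 2) ^ (n + 1) := by ring
end

section
/- For every integer r ≥ 0 and n ≥ r, any r-bounded trifferent code C ⊆ {0,1,2}^n (a trifferent code in which every codeword contains exactly r occurrences of the symbol 2) satisfies |C| ≤ 2 · binomial(n, r). -/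
theorem bounded_trifferent_card {n r : ℕ} (hrn : r ≤ n)
    (C : Finset (Fin n → Fin 3)) (hC : Trifferent C)
    (hr : ∀ x ∈ C, (Finset.univ.filter fun i => x i = 2).card = r) :
    C.card ≤ 2 * n.choose r := by
  set f : (Fin n → Fin 3) → Finset (Fin n) :=
    fun x => Finset.univ.filter fun i => x i = 2 with hf
  have hfiber : ∀ S ∈ C.image f, (C.filter fun x => f x = S).card ≤ 2 := by
    intro S _
    by_contra h
    push_neg at h
    obtain ⟨x, y, z, hx, hy, hz, hxy, hxz, hyz⟩ := Finset.two_lt_card_iff.mp h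
    simp only [Finset.mem_filter] at hx hy hz
    obtain ⟨i, hi⟩ := hC x hx.1 y hy.1 z hz.1 hxy hxz hyz
    have h2 : (2 : Fin 3) ∈ ({x i, y i, z i} : Set (Fin 3)) := by
      rw [hi]; trivial
    have h0 : (0 : Fin 3) ∈ ({x i, y i, z i} : Set (Fin 3)) := by
      rw [hi]; trivial
    have hxi : x i = 2 := by
      rcases h2 with h | h | h
      · exact h.symm
      · have : i ∈ f y := by simp [hf, h.symm]
        rw [hy.2, ← hx.2] at this
        simpa [hf] using this
      · have : i ∈ f z := by simp [hf, h.symm]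
        rw [hz.2, ← hx.2] at this
        simpa [hf] using this
    have hyi : y i = 2 := by
      have : i ∈ f x := by simp [hf, hxi]
      rw [hx.2, ← hy.2] at this
      simpa [hf] using this
    have hzi : z i = 2 := by
      have : i ∈ f x := by simp [hf, hxi]
      rw [hx.2, ← hz.2] at this
      simpa [hf] using this
    simp [hxi, hyi, hzi] at h0
  have h1 : C.card ≤ 2 * (C.image f).card :=
    Finset.card_le_mul_card_image C 2 hfiber
  have h2 : (C.image f).card ≤ n.choose r := by
    have hsub : C.image f ⊆ Finset.powersetCard r Finset.univ := by
      intro S hS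
      obtain ⟨x, hx, rfl⟩ := Finset.mem_image.mp hS
      rw [Finset.mem_powersetCard]
      exact ⟨Finset.subset_univ _, hr x hx⟩
    calc (C.image f).card ≤ (Finset.powersetCard r (Finset.univ : Finset (Fin n))).card :=
          Finset.card_le_card hsub
      _ = n.choose r := by simp
  calc C.card ≤ 2 * (C.image f).card := h1
    _ ≤ 2 * n.choose r := by omega
end

section
/- Let T(n) denote the maximum size of a trifferent code of block length n, and T_b(n, r) the maximum size of an r-bounded trifferent code of block length n. Then for all 0 ≤ r ≤ n, T(n) ≤ 2^(r−n) · (T_b(n, r) / binomial(n, r)) · 3^n. -/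
/-- `T n` is the maximum size of a trifferent code of block length `n`. -/
noncomputable def T (n : ℕ) : ℕ :=
  sSup {k | ∃ C : Finset (Fin n → Fin 3), Trifferent C ∧ C.card = k}

/-- `Tb n r` is the maximum size of an `r`-bounded trifferent code of block length `n`. -/
noncomputable def Tb (n r : ℕ) : ℕ :=
  sSup {k | ∃ C : Finset (Fin n → Fin 3), Trifferent C ∧
    (∀ x ∈ C, (Finset.univ.filter fun i => x i = 2).card = r) ∧ C.card = k}

-- subset of a trifferent code is trifferent
lemma triff_mono {n : ℕ} {C D : Finset (Fin n → Fin 3)} (h : D ⊆ C) (hC : Trifferent C) :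
    Trifferent D :=
  fun x hx y hy z hz => hC x (h hx) y (h hy) z (h hz)

lemma triff_add {n : ℕ} {C : Finset (Fin n → Fin 3)} (hC : Trifferent C) (v : Fin n → Fin 3) :
    Trifferent (C.image (· + v)) := by
  intro x hx y hy z hz hxy hxz hyz
  obtain ⟨a, ha, rfl⟩ := Finset.mem_image.1 hx
  obtain ⟨b, hb, rfl⟩ := Finset.mem_image.1 hy
  obtain ⟨c, hc, rfl⟩ := Finset.mem_image.1 hz
  have hab : a ≠ b := fun h => hxy (by rw [h])
  have hac : a ≠ c := fun h => hxz (by rw [h])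
  have hbc : b ≠ c := fun h => hyz (by rw [h])
  obtain ⟨i, hi⟩ := hC a ha b hb c hc hab hac hbc
  refine ⟨i, ?_⟩
  have h1 : ({(a+v) i, (b+v) i, (c+v) i} : Set (Fin 3)) = (· + v i) '' {a i, b i, c i} := by
    simp [Set.image_insert_eq, Pi.add_apply]
  rw [h1, hi, Set.image_univ]
  exact (Equiv.addRight (v i)).surjective.range_eq

lemma layer_card {n r : ℕ} (hrn : r ≤ n) :
    n.choose r * 2 ^ (n - r) ≤
      (Finset.univ.filter fun x : Fin n → Fin 3 =>
        (Finset.univ.filter fun i => x i = 2).card = r).card := by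
  classical
  set t : Finset (Fin n) → Fin n → Finset (Fin 3) := fun s i => if i ∈ s then {2} else {0,1}
    with ht
  have hfib : ∀ s : Finset (Fin n), ∀ x ∈ Fintype.piFinset (t s),
      (Finset.univ.filter fun i => x i = 2) = s := by
    intro s x hx
    ext i
    have hxi := Fintype.mem_piFinset.1 hx i
    simp only [Finset.mem_filter, Finset.mem_univ, true_and]
    constructor
    · intro h
      by_contra hi
      have h2 : x i ∈ ({0,1} : Finset (Fin 3)) := by simpa [ht, hi] using hxi
      rw [h] at h2
      simp at h2
    · intro h
      have h2 : x i ∈ ({2} : Finset (Fin 3)) := by simpa [ht, h] using hxi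
      simpa using h2
  have hsub : (Finset.univ.powersetCard r).biUnion (fun s => Fintype.piFinset (t s)) ⊆
      Finset.univ.filter fun x : Fin n → Fin 3 =>
        (Finset.univ.filter fun i => x i = 2).card = r := by
    intro x hx
    obtain ⟨s, hs, hxs⟩ := Finset.mem_biUnion.1 hx
    rw [Finset.mem_powersetCard_univ] at hs
    simp only [Finset.mem_filter, Finset.mem_univ, true_and]
    rw [hfib s x hxs, hs]
  have hdisj : ∀ s ∈ Finset.univ.powersetCard r, ∀ s' ∈ Finset.univ.powersetCard r, s ≠ s' →
      Disjoint (Fintype.piFinset (t s)) (Fintype.piFinset (t s')) := by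
    intro s _ s' _ hss
    rw [Finset.disjoint_left]
    intro x hx hx'
    exact hss ((hfib s x hx).symm.trans (hfib s' x hx'))
  have hcardpiece : ∀ s ∈ Finset.univ.powersetCard r,
      (Fintype.piFinset (t s)).card = 2 ^ (n - r) := by
    intro s hs
    rw [Finset.mem_powersetCard_univ] at hs
    rw [Fintype.card_piFinset]
    have : ∀ i, (t s i).card = if i ∈ s then 1 else 2 := by
      intro i; rw [ht]; by_cases h : i ∈ s <;> simp [h]
    simp_rw [this]
    rw [Finset.prod_ite, Finset.prod_const, Finset.prod_const]
    have h1 : (Finset.univ.filter (· ∈ s)) = s := by ext i; simp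
    have h2 : (Finset.univ.filter (¬ · ∈ s)) = sᶜ := by ext i; simp
    rw [h1, h2, one_pow, one_mul, Finset.card_compl, Fintype.card_fin, hs]
  calc n.choose r * 2 ^ (n - r)
      = ∑ s ∈ Finset.univ.powersetCard r, 2 ^ (n - r) := by
        rw [Finset.sum_const, smul_eq_mul, Finset.card_powersetCard, Finset.card_univ,
          Fintype.card_fin]
    _ = ∑ s ∈ Finset.univ.powersetCard r, (Fintype.piFinset (t s)).card :=
        Finset.sum_congr rfl fun s hs => (hcardpiece s hs).symm
    _ = ((Finset.univ.powersetCard r).biUnion fun s => Fintype.piFinset (t s)).card :=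
        (Finset.card_biUnion hdisj).symm
    _ ≤ _ := Finset.card_le_card hsub

lemma key (n r : ℕ) (hrn : r ≤ n) :
    T n * (n.choose r * 2 ^ (n - r)) ≤ 3 ^ n * Tb n r := by
  classical
  have hne : {k | ∃ C : Finset (Fin n → Fin 3), Trifferent C ∧ C.card = k}.Nonempty :=
    ⟨0, ∅, fun x hx => by simp at hx, Finset.card_empty⟩
  have hbdd : BddAbove {k | ∃ C : Finset (Fin n → Fin 3), Trifferent C ∧ C.card = k} := by
    refine ⟨3 ^ n, fun k hk => ?_⟩
    obtain ⟨C, _, rfl⟩ := hk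
    calc C.card ≤ Fintype.card (Fin n → Fin 3) := Finset.card_le_univ C
      _ = 3 ^ n := by simp
  obtain ⟨C, hC, hCcard⟩ := Nat.sSup_mem hne hbdd
  have hbddTb : BddAbove {k | ∃ C : Finset (Fin n → Fin 3), Trifferent C ∧
      (∀ x ∈ C, (Finset.univ.filter fun i => x i = 2).card = r) ∧ C.card = k} := by
    refine ⟨3 ^ n, fun k hk => ?_⟩
    obtain ⟨C, _, _, rfl⟩ := hk
    calc C.card ≤ Fintype.card (Fin n → Fin 3) := Finset.card_le_univ C
      _ = 3 ^ n := by simp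
  set wt : (Fin n → Fin 3) → ℕ := fun x => (Finset.univ.filter fun i => x i = 2).card with hwt
  -- each translate's layer is r-bounded trifferent
  have hDv : ∀ v : Fin n → Fin 3, (C.filter fun a => wt (a + v) = r).card ≤ Tb n r := by
    intro v
    set D : Finset (Fin n → Fin 3) := (C.filter fun a => wt (a + v) = r).image (· + v) with hD
    have hinj : Function.Injective (· + v : (Fin n → Fin 3) → Fin n → Fin 3) :=
      add_left_injective v
    have hcard : D.card = (C.filter fun a => wt (a + v) = r).card :=
      Finset.card_image_of_injective _ hinj
    have hDt : Trifferent D :=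
      triff_mono (Finset.image_subset_image (Finset.filter_subset _ _)) (triff_add hC v)
    have hDw : ∀ x ∈ D, (Finset.univ.filter fun i => x i = 2).card = r := by
      intro x hx
      obtain ⟨a, ha, rfl⟩ := Finset.mem_image.1 hx
      exact (Finset.mem_filter.1 ha).2
    rw [← hcard]
    exact le_csSup hbddTb ⟨D, hDt, hDw, rfl⟩
  have hsum : ∑ v : Fin n → Fin 3, (C.filter fun a => wt (a + v) = r).card ≤ 3 ^ n * Tb n r := by
    calc ∑ v : Fin n → Fin 3, (C.filter fun a => wt (a + v) = r).card
        ≤ ∑ _v : Fin n → Fin 3, Tb n r := Finset.sum_le_sum fun v _ => hDv v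
      _ = 3 ^ n * Tb n r := by
          rw [Finset.sum_const, Finset.card_univ, smul_eq_mul]
          congr 1
          simp
  -- lower bound for the sum
  have hswap : ∑ v : Fin n → Fin 3, (C.filter fun a => wt (a + v) = r).card
      = ∑ a ∈ C, (Finset.univ.filter fun v : Fin n → Fin 3 => wt (a + v) = r).card := by
    simp_rw [Finset.card_filter]
    rw [Finset.sum_comm]
  have hinner : ∀ a : Fin n → Fin 3,
      (Finset.univ.filter fun v : Fin n → Fin 3 => wt (a + v) = r).card
      = (Finset.univ.filter fun x : Fin n → Fin 3 => wt x = r).card := by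
    intro a
    apply Finset.card_equiv (Equiv.addLeft a)
    intro v
    simp [Equiv.coe_addLeft]
  calc T n * (n.choose r * 2 ^ (n - r))
      ≤ C.card * (Finset.univ.filter fun x : Fin n → Fin 3 => wt x = r).card := by
        rw [hCcard]
        exact Nat.mul_le_mul_left _ (layer_card hrn)
    _ = ∑ a ∈ C, (Finset.univ.filter fun v : Fin n → Fin 3 => wt (a + v) = r).card := by
        rw [Finset.sum_congr rfl fun a _ => hinner a, Finset.sum_const, smul_eq_mul]
    _ = ∑ v : Fin n → Fin 3, (C.filter fun a => wt (a + v) = r).card := hswap.symm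
    _ ≤ 3 ^ n * Tb n r := hsum

theorem T_le_of_Tb (n r : ℕ) (hrn : r ≤ n) :
    (T n : ℝ) ≤ (2 : ℝ) ^ ((r : ℤ) - (n : ℤ)) * ((Tb n r : ℝ) / (n.choose r : ℝ)) * 3 ^ n := by
  have hkey := key n r hrn
  have hkeyR : (T n : ℝ) * ((n.choose r : ℝ) * 2 ^ (n - r)) ≤ 3 ^ n * (Tb n r : ℝ) := by
    exact_mod_cast hkey
  have hc : (0 : ℝ) < (n.choose r : ℝ) := by
    exact_mod_cast Nat.choose_pos hrn
  have hp : (0 : ℝ) < (2 : ℝ) ^ (n - r) := by positivity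
  have hz : (2 : ℝ) ^ ((r : ℤ) - (n : ℤ)) = ((2 : ℝ) ^ (n - r))⁻¹ := by
    rw [show (r : ℤ) - (n : ℤ) = -((n - r : ℕ) : ℤ) by push_cast [Nat.cast_sub hrn]; ring,
      zpow_neg, zpow_natCast]
  rw [hz]
  rw [show ((2:ℝ) ^ (n - r))⁻¹ * ((Tb n r : ℝ) / (n.choose r : ℝ)) * 3 ^ n
      = (3 ^ n * (Tb n r : ℝ)) / ((n.choose r : ℝ) * 2 ^ (n - r)) by field_simp]
  rw [le_div_iff₀ (by positivity)]
  exact hkeyR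
end

section
/- Let C ⊆ {0,1,2}^n be a trifferent code and let S ⊆ {0,1,2}^n be any nonempty set. Let T_b(S) be the maximum size of a trifferent code contained in S. Then |C| ≤ (T_b(S) / |S|) · 3^n. -/
def TrifferentZ {n : ℕ} (C : Finset (Fin n → ZMod 3)) : Prop :=
  ∀ x ∈ C, ∀ y ∈ C, ∀ z ∈ C, x ≠ y → x ≠ z → y ≠ z →
    ∃ i : Fin n, ({x i, y i, z i} : Set (ZMod 3)) = Set.univ

/-- `TbS S` is the maximum size of a trifferent code contained in `S`. -/
noncomputable def TbS {n : ℕ} (S : Finset (Fin n → ZMod 3)) : ℕ :=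
  sSup {k | ∃ D : Finset (Fin n → ZMod 3), TrifferentZ D ∧ D ⊆ S ∧ D.card = k}

lemma triff_translate {n : ℕ} (C : Finset (Fin n → ZMod 3)) (v : Fin n → ZMod 3)
    (hC : TrifferentZ C) : TrifferentZ (C.image (· + v)) := by
  intro x hx y hy z hz hxy hxz hyz
  obtain ⟨a, ha, rfl⟩ := Finset.mem_image.mp hx
  obtain ⟨b, hb, rfl⟩ := Finset.mem_image.mp hy
  obtain ⟨c, hc, rfl⟩ := Finset.mem_image.mp hz
  obtain ⟨i, hi⟩ := hC a ha b hb c hc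
    (fun h => hxy (by rw [h])) (fun h => hxz (by rw [h])) (fun h => hyz (by rw [h]))
  refine ⟨i, ?_⟩
  have : ({(a + v) i, (b + v) i, (c + v) i} : Set (ZMod 3))
      = (· + v i) '' ({a i, b i, c i} : Set (ZMod 3)) := by
    simp [Set.image_insert_eq, Pi.add_apply]
  rw [this, hi, Set.image_univ, Set.range_eq_univ]
  exact (Equiv.addRight (v i)).surjective

lemma triff_inter {n : ℕ} {C S : Finset (Fin n → ZMod 3)} (hC : TrifferentZ C) :
    TrifferentZ (C ∩ S) := fun x hx y hy z hz hxy hxz hyz =>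
  hC x (Finset.mem_inter.mp hx).1 y (Finset.mem_inter.mp hy).1 z (Finset.mem_inter.mp hz).1
    hxy hxz hyz

lemma le_TbS {n : ℕ} {S D : Finset (Fin n → ZMod 3)} (hD : TrifferentZ D) (hsub : D ⊆ S) :
    D.card ≤ TbS S :=
  le_csSup ⟨S.card, fun k ⟨D', _, hsub', hc⟩ => hc ▸ Finset.card_le_card hsub'⟩
    ⟨D, hD, hsub, rfl⟩

theorem trifferent_density_bound {n : ℕ} (C S : Finset (Fin n → ZMod 3))
    (hC : TrifferentZ C) (hS : S.Nonempty) :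
    (C.card : ℝ) ≤ ((TbS S : ℝ) / (S.card : ℝ)) * 3 ^ n := by
  -- counting identity
  have key : C.card * S.card = ∑ v : Fin n → ZMod 3, ((C.image (· + v)) ∩ S).card := by
    have step : ∀ v : Fin n → ZMod 3,
        ((C.image (· + v)) ∩ S).card = (C.filter (fun c => c + v ∈ S)).card := by
      intro v
      have : (C.image (· + v)) ∩ S = (C.filter (fun c => c + v ∈ S)).image (· + v) := by
        ext x
        simp only [Finset.mem_inter, Finset.mem_image, Finset.mem_filter]
        constructor
        · rintro ⟨⟨c, hc, rfl⟩, hxS⟩; exact ⟨c, ⟨hc, hxS⟩, rfl⟩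
        · rintro ⟨c, ⟨hc, hcS⟩, rfl⟩; exact ⟨⟨c, hc, rfl⟩, hcS⟩
      rw [this, Finset.card_image_of_injective _ (add_left_injective v)]
    simp_rw [step, Finset.card_filter]
    rw [Finset.sum_comm]
    have inner : ∀ c : Fin n → ZMod 3,
        (∑ v : Fin n → ZMod 3, if c + v ∈ S then 1 else 0) = S.card := by
      intro c
      rw [Fintype.sum_equiv (Equiv.addLeft c) _ (fun w => if w ∈ S then 1 else 0)
        (fun v => by simp [Equiv.addLeft])]
      simp [Finset.sum_ite_mem]
    simp_rw [inner, Finset.sum_const, smul_eq_mul]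
  -- each term bounded
  have bound : ∀ v : Fin n → ZMod 3, ((C.image (· + v)) ∩ S).card ≤ TbS S := fun v =>
    le_TbS (triff_inter (triff_translate C v hC)) Finset.inter_subset_right
  have total : C.card * S.card ≤ 3 ^ n * TbS S := by
    calc C.card * S.card = ∑ v : Fin n → ZMod 3, ((C.image (· + v)) ∩ S).card := key
      _ ≤ ∑ _v : Fin n → ZMod 3, TbS S := Finset.sum_le_sum fun v _ => bound v
      _ = 3 ^ n * TbS S := by
          rw [Finset.sum_const, smul_eq_mul]
          congr 1
          simp [Fintype.card_fun]
  have hSpos : (0 : ℝ) < S.card := by exact_mod_cast hS.card_pos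
  rw [div_mul_eq_mul_div, le_div_iff₀ hSpos]
  calc (C.card : ℝ) * S.card = ((C.card * S.card : ℕ) : ℝ) := by push_cast; ring
    _ ≤ ((3 ^ n * TbS S : ℕ) : ℝ) := by exact_mod_cast total
    _ = (TbS S : ℝ) * 3 ^ n := by push_cast; ring
end

section
/- For all integers r ≥ 1 and n ≥ r + 1, T_b(n, r+1) ≤ (n / (r+1)) · T_b(n−1, r), where T_b(m, s) is the maximum size of a trifferent code in {0,1,2}^m all of whose codewords contain exactly s twos. -/
lemma Tb_bdd (n r : ℕ) : BddAbove {k | ∃ C : Finset (Fin n → Fin 3), Trifferent C ∧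
    (∀ x ∈ C, (Finset.univ.filter fun i => x i = 2).card = r) ∧ C.card = k} := by
  refine ⟨Fintype.card (Fin n → Fin 3), ?_⟩
  rintro k ⟨C, -, -, rfl⟩
  exact Finset.card_le_univ C

lemma le_Tb {n r k : ℕ} (C : Finset (Fin n → Fin 3)) (h1 : Trifferent C)
    (h2 : ∀ x ∈ C, (Finset.univ.filter fun i => x i = 2).card = r) (h3 : C.card = k) :
    k ≤ Tb n r :=
  le_csSup (Tb_bdd n r) ⟨C, h1, h2, h3⟩

lemma Tb_spec (n r : ℕ) : ∃ C : Finset (Fin n → Fin 3), Trifferent C ∧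
    (∀ x ∈ C, (Finset.univ.filter fun i => x i = 2).card = r) ∧ C.card = Tb n r := by
  have hne : {k | ∃ C : Finset (Fin n → Fin 3), Trifferent C ∧
      (∀ x ∈ C, (Finset.univ.filter fun i => x i = 2).card = r) ∧ C.card = k}.Nonempty :=
    ⟨0, ∅, by intro x hx; simp at hx, by intro x hx; simp at hx, rfl⟩
  exact Nat.sSup_mem hne (Tb_bdd n r)

lemma image_delete {m : ℕ} (x : Fin (m+1) → Fin 3) (i : Fin (m+1)) :
    Finset.image i.succAbove (Finset.univ.filter fun k : Fin m => x (i.succAbove k) = 2)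
      = (Finset.univ.filter fun j => x j = 2).erase i := by
  ext j
  simp only [Finset.mem_image, Finset.mem_filter, Finset.mem_univ, true_and, Finset.mem_erase]
  constructor
  · rintro ⟨k, hk, rfl⟩
    exact ⟨Fin.succAbove_ne i k, hk⟩
  · rintro ⟨hji, hj⟩
    obtain ⟨k, hk⟩ := Fin.exists_succAbove_eq hji
    exact ⟨k, by rw [hk]; exact hj, hk⟩

lemma card_twos_delete {m : ℕ} (x : Fin (m+1) → Fin 3) (i : Fin (m+1)) (hx : x i = 2) :
    (Finset.univ.filter fun k : Fin m => x (i.succAbove k) = 2).card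
      = (Finset.univ.filter fun j => x j = 2).card - 1 := by
  have hinj : Function.Injective i.succAbove := Fin.succAbove_right_injective
  calc (Finset.univ.filter fun k : Fin m => x (i.succAbove k) = 2).card
      = (Finset.image i.succAbove
          (Finset.univ.filter fun k : Fin m => x (i.succAbove k) = 2)).card :=
        (Finset.card_image_of_injective _ hinj).symm
    _ = ((Finset.univ.filter fun j => x j = 2).erase i).card := by rw [image_delete]
    _ = _ := Finset.card_erase_of_mem (by simp [hx])

theorem Tb_succ_le (n r : ℕ) (hr : 1 ≤ r) (hn : r + 1 ≤ n) :
    (Tb n (r + 1) : ℝ) ≤ ((n : ℝ) / (r + 1 : ℝ)) * (Tb (n - 1) r : ℝ) := by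
  obtain ⟨m, rfl⟩ : ∃ m, n = m + 1 := ⟨n - 1, by omega⟩
  obtain ⟨C, hC, hCtwos, hCcard⟩ := Tb_spec (m + 1) (r + 1)
  -- double counting
  have hsum : ∑ i : Fin (m+1), (C.filter fun x => x i = 2).card = (r + 1) * C.card := by
    have : ∀ i : Fin (m+1), (C.filter fun x => x i = 2).card
        = ∑ x ∈ C, if x i = 2 then 1 else 0 := fun i => Finset.card_filter _ _
    simp only [this]
    rw [Finset.sum_comm]
    have : ∀ x ∈ C, (∑ i : Fin (m+1), if x i = 2 then 1 else 0) = r + 1 := by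
      intro x hx
      rw [← Finset.card_filter]
      exact hCtwos x hx
    rw [Finset.sum_congr rfl this, Finset.sum_const, smul_eq_mul, hCcard, mul_comm]
  -- pick maximizing coordinate
  have hmaxex := Finset.exists_max_image (Finset.univ : Finset (Fin (m+1)))
    (fun i : Fin (m+1) => (C.filter fun x => x i = 2).card)
    ⟨(0 : Fin (m+1)), Finset.mem_univ _⟩
  obtain ⟨i, -, hi⟩ := hmaxex
  have hkey : (r + 1) * C.card ≤ (m + 1) * (C.filter fun x => x i = 2).card := by
    rw [← hsum]
    calc ∑ j : Fin (m+1), (C.filter fun x => x j = 2).card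
        ≤ ∑ _j : Fin (m+1), (C.filter fun x => x i = 2).card :=
          Finset.sum_le_sum fun j _ => hi j (Finset.mem_univ j)
      _ = (m + 1) * (C.filter fun x => x i = 2).card := by
          rw [Finset.sum_const, smul_eq_mul, Finset.card_univ, Fintype.card_fin]
  -- build deleted code
  set C' := C.filter fun x => x i = 2 with hC'
  set D : Finset (Fin m → Fin 3) := C'.image (fun x k => x (i.succAbove k)) with hD
  have hmem : ∀ x ∈ C', x i = 2 := fun x hx => (Finset.mem_filter.mp hx).2
  have hinjOn : Set.InjOn (fun (x : Fin (m+1) → Fin 3) (k : Fin m) => x (i.succAbove k)) ↑C' := by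
    intro x hx y hy hxy
    funext j
    rcases eq_or_ne j i with rfl | hne
    · rw [hmem x hx, hmem y hy]
    · obtain ⟨k, hk⟩ := Fin.exists_succAbove_eq hne
      rw [← hk]
      exact congrFun hxy k
  have hDcard : D.card = C'.card := Finset.card_image_of_injOn hinjOn
  have hDtriff : Trifferent D := by
    intro x' hx' y' hy' z' hz' hxy hxz hyz
    obtain ⟨x, hx, rfl⟩ := Finset.mem_image.mp hx'
    obtain ⟨y, hy, rfl⟩ := Finset.mem_image.mp hy'
    obtain ⟨z, hz, rfl⟩ := Finset.mem_image.mp hz'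
    have hxC : x ∈ C := (Finset.mem_filter.mp hx).1
    have hyC : y ∈ C := (Finset.mem_filter.mp hy).1
    have hzC : z ∈ C := (Finset.mem_filter.mp hz).1
    obtain ⟨j, hj⟩ := hC x hxC y hyC z hzC
      (fun h => hxy (by rw [h])) (fun h => hxz (by rw [h])) (fun h => hyz (by rw [h]))
    have hji : j ≠ i := by
      rintro rfl
      rw [hmem x hx, hmem y hy, hmem z hz] at hj
      have : (0 : Fin 3) ∈ ({(2 : Fin 3), 2, 2} : Set (Fin 3)) := hj ▸ Set.mem_univ _
      simp at this
    obtain ⟨k, hk⟩ := Fin.exists_succAbove_eq hji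
    exact ⟨k, by simpa [hk] using hj⟩
  have hDtwos : ∀ x' ∈ D, (Finset.univ.filter fun k => x' k = 2).card = r := by
    intro x' hx'
    obtain ⟨x, hx, rfl⟩ := Finset.mem_image.mp hx'
    have h1 := card_twos_delete x i (hmem x hx)
    have h2 := hCtwos x (Finset.mem_filter.mp hx).1
    simp only [h1, h2]
    exact Nat.succ_sub_one r
  have hDle : D.card ≤ Tb m r := le_Tb D hDtriff hDtwos rfl
  -- conclude
  have hnat : (r + 1) * Tb (m + 1) (r + 1) ≤ (m + 1) * Tb m r := by
    calc (r + 1) * Tb (m + 1) (r + 1) = (r + 1) * C.card := by rw [hCcard]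
      _ ≤ (m + 1) * C'.card := hkey
      _ = (m + 1) * D.card := by rw [hDcard]
      _ ≤ (m + 1) * Tb m r := Nat.mul_le_mul_left _ hDle
  have : ((m : ℝ) + 1 - 1) = (m : ℝ) := by ring
  rw [show (m + 1 - 1 : ℕ) = m from rfl]
  rw [div_mul_eq_mul_div, le_div_iff₀ (by positivity)]
  have := (Nat.cast_le (α := ℝ)).mpr hnat
  push_cast at this ⊢
  linarith
end

section
/- There is a constant c' such that for all n, every trifferent code C ⊆ {0,1,2}^n in which each codeword contains exactly two 2's satisfies |C| ≤ c' · n^(5/3). -/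
open Finset

section KovariSosTuran

variable {V : Type*} [Fintype V] [DecidableEq V] (G : SimpleGraph V) [DecidableRel G.Adj]

theorem SimpleGraph.sum_choose_degree_le_of_card_commonNbrs_le {t : ℕ}
    (h : ∀ a b c, a ≠ b → a ≠ c → b ≠ c → #{v | G.Adj a v ∧ G.Adj b v ∧ G.Adj c v} ≤ t) :
    ∑ v, (G.degree v).choose 3 ≤ t * (Fintype.card V).choose 3 := by
  set r : V → Finset V → Prop := fun v s => s ⊆ G.neighborFinset v
  have above : ∀ v, #((powersetCard 3 univ).bipartiteAbove r v) = (G.degree v).choose 3 := by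
    intro v
    rw [← G.card_neighborFinset_eq_degree, ← card_powersetCard]
    congr 1
    ext s
    simp [r, bipartiteAbove, mem_powersetCard, and_comm]
  have below : ∀ s ∈ powersetCard 3 univ, #(univ.bipartiteBelow r s) ≤ t := by
    intro s hs
    obtain ⟨a, b, c, hab, hac, hbc, rfl⟩ := card_eq_three.mp (mem_powersetCard.mp hs).2
    convert h a b c hab hac hbc using 2
    ext v
    simp [r, bipartiteBelow, insert_subset_iff, G.adj_comm]
  calc ∑ v, (G.degree v).choose 3 = ∑ s ∈ powersetCard 3 univ, #(univ.bipartiteBelow r s) := by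
        simp_rw [← above]; exact sum_card_bipartiteAbove_eq_sum_card_bipartiteBelow _
    _ ≤ ∑ s ∈ powersetCard 3 (univ : Finset V), t := sum_le_sum below
    _ = t * (Fintype.card V).choose 3 := by simp [mul_comm]

theorem Nat.sub_two_pow_three_le_six_mul_choose (d : ℕ) : (d - 2) ^ 3 ≤ 6 * d.choose 3 := by
  have := Nat.pow_sub_le_descFactorial d 3
  rwa [Nat.descFactorial_eq_factorial_mul_choose, show d + 1 - 3 = d - 2 by omega] at this

theorem Nat.six_mul_choose_three_le (n : ℕ) : 6 * n.choose 3 ≤ n ^ 3 := by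
  have := Nat.descFactorial_le_pow n 3
  rwa [Nat.descFactorial_eq_factorial_mul_choose] at this

theorem sum_sub_two_pow_three_le {ι : Type*} [Fintype ι] (d : ι → ℕ) {t : ℕ}
    (h : ∑ i, (d i).choose 3 ≤ t * (Fintype.card ι).choose 3) :
    (∑ i, (d i - 2)) ^ 3 ≤ t * Fintype.card ι ^ 5 := by
  set n := Fintype.card ι
  calc (∑ i, (d i - 2)) ^ 3 ≤ n ^ 2 * ∑ i, (d i - 2) ^ 3 := by
        simpa using pow_sum_le_card_mul_sum_pow (s := univ) (f := fun i => d i - 2) (by simp) 2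
    _ ≤ n ^ 2 * (6 * ∑ i, (d i).choose 3) := by
        gcongr n ^ 2 * ?_
        rw [mul_sum]
        exact sum_le_sum fun i _ => Nat.sub_two_pow_three_le_six_mul_choose _
    _ ≤ n ^ 2 * (t * (6 * n.choose 3)) := by gcongr n ^ 2 * ?_; linarith
    _ ≤ n ^ 2 * (t * n ^ 3) := by gcongr; exact Nat.six_mul_choose_three_le n
    _ = t * n ^ 5 := by ring

theorem sum_le_of_sum_choose_three_le {ι : Type*} [Fintype ι] (d : ι → ℕ) {t : ℕ}
    (h : ∑ i, (d i).choose 3 ≤ t * (Fintype.card ι).choose 3) :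
    (∑ i, d i : ℝ) ≤ (t : ℝ) ^ (3⁻¹ : ℝ) * (Fintype.card ι : ℝ) ^ (5 / 3 : ℝ)
      + 2 * Fintype.card ι := by
  set n := Fintype.card ι
  have hsplit : ∑ i, d i ≤ ∑ i, (d i - 2) + 2 * n := by
    calc ∑ i, d i ≤ ∑ i, (d i - 2 + 2) := sum_le_sum fun i _ => by omega
      _ = ∑ i, (d i - 2) + 2 * n := by simp [sum_add_distrib, mul_comm, n]
  have hcube : ((∑ i, (d i - 2) : ℕ) : ℝ) ≤ ((t * n ^ 5 : ℕ) : ℝ) ^ (3⁻¹ : ℝ) := by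
    rw [Real.le_rpow_inv_iff_of_pos (by positivity) (by positivity) (by norm_num)]
    exact_mod_cast sum_sub_two_pow_three_le d h
  have hroot : ((t * n ^ 5 : ℕ) : ℝ) ^ (3⁻¹ : ℝ) = (t : ℝ) ^ (3⁻¹ : ℝ) * (n : ℝ) ^ (5 / 3 : ℝ) := by
    rw [Nat.cast_mul, Real.mul_rpow (by positivity) (by positivity), Nat.cast_pow,
      ← Real.rpow_natCast, ← Real.rpow_mul (by positivity)]
    norm_num
  calc (∑ i, d i : ℝ) ≤ ((∑ i, (d i - 2) + 2 * n : ℕ) : ℝ) := by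
        rw [← Nat.cast_sum]; exact_mod_cast hsplit
    _ ≤ _ := by rw [hroot] at hcube; push_cast at hcube ⊢; linarith

theorem SimpleGraph.sum_degree_le_of_card_commonNbrs_le {t : ℕ}
    (h : ∀ a b c, a ≠ b → a ≠ c → b ≠ c → #{v | G.Adj a v ∧ G.Adj b v ∧ G.Adj c v} ≤ t) :
    (∑ v, G.degree v : ℝ) ≤ (t : ℝ) ^ (3⁻¹ : ℝ) * (Fintype.card V : ℝ) ^ (5 / 3 : ℝ)
      + 2 * Fintype.card V :=
  sum_le_of_sum_choose_three_le _ (G.sum_choose_degree_le_of_card_commonNbrs_le h)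

end KovariSosTuran

namespace Trifferent

variable {n : ℕ} {C : Finset (Fin n → Fin 3)}

theorem exists_apply_ne (hC : Trifferent C) {x y z : Fin n → Fin 3} (hx : x ∈ C) (hy : y ∈ C)
    (hz : z ∈ C) (hxy : x ≠ y) (hxz : x ≠ z) (hyz : y ≠ z) :
    ∃ i, (x i = 2 ∨ y i = 2 ∨ z i = 2) ∧ x i ≠ y i ∧ x i ≠ z i ∧ y i ≠ z i := by
  obtain ⟨i, hi⟩ := hC x hx y hy z hz hxy hxz hyz
  have fin_three_cover : ∀ p q r : Fin 3, (∀ s, s = p ∨ s = q ∨ s = r) →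
      (p = 2 ∨ q = 2 ∨ r = 2) ∧ p ≠ q ∧ p ≠ r ∧ q ≠ r := by decide
  exact ⟨i, fin_three_cover _ _ _ fun s => by simpa using hi.ge (Set.mem_univ s)⟩

def twos (x : Fin n → Fin 3) : Finset (Fin n) := {i | x i = 2}

@[simp]
theorem mem_twos {x : Fin n → Fin 3} {i : Fin n} : i ∈ twos x ↔ x i = 2 := by
  simp [twos]

theorem card_filter_twos_eq_le_two (hC : Trifferent C) (s : Finset (Fin n)) :
    #{x ∈ C | twos x = s} ≤ 2 := by
  by_contra! h
  obtain ⟨x, hx, y, hy, z, hz, hxy, hxz, hyz⟩ := two_lt_card.mp h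
  simp only [mem_filter] at hx hy hz
  obtain ⟨i, h2, hne⟩ := hC.exists_apply_ne hx.1 hy.1 hz.1 hxy hxz hyz
  have same : ∀ w : Fin n → Fin 3, twos w = s → (w i = 2 ↔ i ∈ s) := by
    rintro w rfl; exact mem_twos.symm
  grind [same x hx.2, same y hy.2, same z hz.2]

def twosGraph (C : Finset (Fin n → Fin 3)) : SimpleGraph (Fin n) where
  Adj p q := p ≠ q ∧ ∃ x ∈ C, twos x = {p, q}
  symm.symm _ _ := fun ⟨hpq, x, hx, h⟩ => ⟨hpq.symm, x, hx, by rw [h, pair_comm]⟩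
  loopless.irrefl _ h := h.1 rfl

instance : DecidableRel (twosGraph C).Adj :=
  inferInstanceAs <| DecidableRel fun p q => p ≠ q ∧ ∃ x ∈ C, twos x = {p, q}

theorem card_le_sum_degree_twosGraph (hC : Trifferent C) (h2 : ∀ x ∈ C, #(twos x) = 2) :
    #C ≤ ∑ v, (twosGraph C).degree v := by
  have himage : #(C.image twos) ≤ #(twosGraph C).edgeFinset := by
    refine card_le_card_of_surjOn Sym2.toFinset fun s hs => ?_
    obtain ⟨x, hx, rfl⟩ := mem_image.mp hs
    obtain ⟨p, q, hpq, hpair⟩ := card_eq_two.mp (h2 x hx)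
    exact ⟨s(p, q), SimpleGraph.mem_edgeFinset.2 ⟨hpq, x, hx, hpair⟩,
      by rw [Sym2.toFinset_mk_eq, hpair]⟩
  calc #C ≤ 2 * #(C.image twos) :=
        card_le_mul_card_image _ 2 fun s _ => hC.card_filter_twos_eq_le_two s
    _ ≤ 2 * #(twosGraph C).edgeFinset := by gcongr
    _ = ∑ v, (twosGraph C).degree v := (SimpleGraph.sum_degrees_eq_twice_card_edges _).symm

noncomputable def codewordOn (C : Finset (Fin n → Fin 3)) (p q : Fin n) : Fin n → Fin 3 :=
  if h : ∃ x ∈ C, twos x = {p, q} then h.choose else 0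

theorem codewordOn_spec {p q : Fin n} (h : (twosGraph C).Adj p q) :
    codewordOn C p q ∈ C ∧ ∀ i, codewordOn C p q i = 2 ↔ i = p ∨ i = q := by
  obtain ⟨hx, htwos⟩ := (h.2.choose_spec : _ ∧ _)
  rw [codewordOn, dif_pos h.2]
  refine ⟨hx, fun i => ?_⟩
  rw [← mem_twos, htwos, mem_insert, mem_singleton]

theorem apply_ne_of_apply_eq (hC : Trifferent C) {a b u v : Fin n} {x x' y : Fin n → Fin 3}
    (hx : x ∈ C) (hx' : x' ∈ C) (hy : y ∈ C) (h2x : ∀ i, x i = 2 ↔ i = a ∨ i = u)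
    (h2x' : ∀ i, x' i = 2 ↔ i = a ∨ i = v) (h2y : ∀ i, y i = 2 ↔ i = b ∨ i = v)
    (hab : a ≠ b) (hav : a ≠ v) (hau : a ≠ u) (huv : u ≠ v) (hb : x b = x' b) : x' u ≠ y u := by
  have hxx' : x ≠ x' := ne_of_apply_ne (· u) (by grind)
  have hxy : x ≠ y := ne_of_apply_ne (· a) (by grind)
  have hx'y : x' ≠ y := ne_of_apply_ne (· a) (by grind)
  obtain ⟨i, h2, hne⟩ := hC.exists_apply_ne hx hx' hy hxx' hxy hx'y
  grind

theorem card_commonNbrs_twosGraph_le (hC : Trifferent C) {a b c : Fin n} (hab : a ≠ b)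
    (hac : a ≠ c) (hbc : b ≠ c) :
    #{v | (twosGraph C).Adj a v ∧ (twosGraph C).Adj b v ∧ (twosGraph C).Adj c v} ≤ 27 := by
  by_contra! h
  obtain ⟨u, hu, v, hv, huv, hσ⟩ := exists_ne_map_eq_of_card_lt_of_maps_to (t := univ)
    (f := fun v => (codewordOn C a v b, codewordOn C a v c, codewordOn C b v c))
    (by simpa using h) (by simp)
  simp only [mem_filter, mem_univ, true_and, Prod.mk.injEq] at hu hv hσ
  have hne {p q : Fin n} (hpq : p ≠ q) (hpu : (twosGraph C).Adj p u) (hpv : (twosGraph C).Adj p v)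
      (hqv : (twosGraph C).Adj q v) (hsig : codewordOn C p u q = codewordOn C p v q) :
      codewordOn C p v u ≠ codewordOn C q v u :=
    apply_ne_of_apply_eq hC (codewordOn_spec hpu).1 (codewordOn_spec hpv).1
      (codewordOn_spec hqv).1 (codewordOn_spec hpu).2 (codewordOn_spec hpv).2
      (codewordOn_spec hqv).2 hpq hpv.1 hpu.1 huv hsig
  have hne2 {p : Fin n} (hpu : (twosGraph C).Adj p u) (hpv : (twosGraph C).Adj p v) :
      codewordOn C p v u ≠ 2 := by
    rw [Ne, (codewordOn_spec hpv).2]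
    grind [hpu.1]
  have pigeon : ∀ p q r : Fin 3, p ≠ q → p ≠ r → q ≠ r → p = 2 ∨ q = 2 ∨ r = 2 := by decide
  rcases pigeon _ _ _ (hne hab hu.1 hv.1 hv.2.1 hσ.1) (hne hac hu.1 hv.1 hv.2.2 hσ.2.1)
    (hne hbc hu.2.1 hv.2.1 hv.2.2 hσ.2.2) with h | h | h
  · exact hne2 hu.1 hv.1 h
  · exact hne2 hu.2.1 hv.2.1 h
  · exact hne2 hu.2.2 hv.2.2 h

end Trifferent

theorem two_bounded_trifferent_bound :
    ∃ c' : ℝ, ∀ n : ℕ, ∀ C : Finset (Fin n → Fin 3), Trifferent C →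
      (∀ x ∈ C, (Finset.univ.filter fun i => x i = 2).card = 2) →
      (C.card : ℝ) ≤ c' * (n : ℝ) ^ ((5 : ℝ) / 3) := by
  refine ⟨5, fun n C hC h2 => ?_⟩
  have hdeg := (Trifferent.twosGraph C).sum_degree_le_of_card_commonNbrs_le
    fun _ _ _ => hC.card_commonNbrs_twosGraph_le
  have cbrt_27 : (27 : ℝ) ^ (3⁻¹ : ℝ) = 3 := by
    rw [show (27 : ℝ) = 3 ^ 3 by norm_num]
    exact Real.pow_rpow_inv_natCast (by norm_num) (by norm_num)
  have hn : (n : ℝ) ≤ (n : ℝ) ^ ((5 : ℝ) / 3) := by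
    rcases Nat.eq_zero_or_pos n with rfl | hpos
    · simp
    · exact Real.self_le_rpow_of_one_le (by exact_mod_cast hpos) (by norm_num)
  calc (C.card : ℝ) ≤ ∑ v, (Trifferent.twosGraph C).degree v := by
        exact_mod_cast hC.card_le_sum_degree_twosGraph h2
    _ ≤ 3 * (n : ℝ) ^ ((5 : ℝ) / 3) + 2 * n := by simpa [cbrt_27] using hdeg
    _ ≤ 5 * (n : ℝ) ^ ((5 : ℝ) / 3) := by linarith
end

section
/- Suppose φ: P → {0,1,2}^n and ψ: L → {0,1,2}^n are injections whose images are trifferent codes, where P are the points and L the affine lines of F_q^2, and for each ℓ ∈ L let σ_ℓ be a fixed-point-free permutation of the points of ℓ. Define τ on incidences S = {(p,ℓ) : p ∈ ℓ} by τ(p,ℓ) = (φ(p), ψ(ℓ), φ(σ_ℓ(p))) ∈ {0,1,2}^(3n). Then the image of τ is a trifferent code of size q^3 + q^2 in {0,1,2}^(3n). -/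
/-!
Write `s(p, ℓ) = σ_ℓ(p)`. Among three distinct incidences either the points are pairwise distinct,
or the lines are, or two of them share a point `p` and two share a line `ℓ`. In the last case
`p ∈ ℓ`, so for any two of the three incidences the point of one lies on the line of the other;
since two distinct lines meet at most once and each `σ_ℓ` is injective without fixed points, `s`
then takes three distinct values. Hence one of the three blocks `φ p`, `ψ ℓ`, `φ (s(p, ℓ))` of the
word `τ(p, ℓ)` runs through three distinct codewords of a trifferent code. As `φ` and `ψ` are
injective, so is `τ`, and there are `q` points on each of the `q² + q` lines.
-/

/-- Trifference for codes indexed by an arbitrary coordinate set. -/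
def TrifferentSet {ι : Type*} (C : Set (ι → Fin 3)) : Prop :=
  ∀ x ∈ C, ∀ y ∈ C, ∀ z ∈ C, x ≠ y → x ≠ z → y ≠ z →
    ∃ i : ι, ({x i, y i, z i} : Set (Fin 3)) = Set.univ

def IsAffineLine (F : Type*) [Field F] (ℓ : Set (F × F)) : Prop :=
  ∃ v d : F × F, d ≠ 0 ∧ ℓ = {p | ∃ t : F, p = v + t • d}

theorem trifferentSet_range_iff {α ι : Type*} {f : α → ι → Fin 3} :
    TrifferentSet (Set.range f) ↔ ∀ a b c, f a ≠ f b → f a ≠ f c → f b ≠ f c →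
      ∃ i, ({f a i, f b i, f c i} : Set (Fin 3)) = Set.univ := by
  simp only [TrifferentSet, Set.forall_mem_range]

theorem TrifferentSet.exists_block {α S κ ι : Type*} {c : α → ι → Fin 3}
    (hc : TrifferentSet (Set.range c)) (hinj : Function.Injective c)
    {w : S → κ × ι → Fin 3} (k : κ) (f : S → α) (hw : ∀ x i, w x (k, i) = c (f x) i)
    {x y z : S} (hxy : f x ≠ f y) (hxz : f x ≠ f z) (hyz : f y ≠ f z) :
    ∃ j, ({w x j, w y j, w z j} : Set (Fin 3)) = Set.univ := by
  obtain ⟨i, hi⟩ := trifferentSet_range_iff.mp hc _ _ _ (hinj.ne hxy) (hinj.ne hxz) (hinj.ne hyz)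
  exact ⟨(k, i), by simpa only [hw] using hi⟩

section IncidenceStructure

variable {P L ι : Type*} (line : L → Set P)

def LinesMeetInAtMostOnePoint : Prop :=
  ∀ ⦃ℓ₁ ℓ₂ : L⦄ ⦃a b : P⦄, a ≠ b → a ∈ line ℓ₁ → b ∈ line ℓ₁ → a ∈ line ℓ₂ → b ∈ line ℓ₂ →
    ℓ₁ = ℓ₂

abbrev Incidence : Type _ := {x : P × L // x.1 ∈ line x.2}

variable {line}

def Incidence.shift (σ : ∀ ℓ, line ℓ → line ℓ) (x : Incidence line) : P :=
  σ x.1.2 ⟨x.1.1, x.2⟩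

theorem Incidence.shift_ne_shift (hL : LinesMeetInAtMostOnePoint line)
    {σ : ∀ ℓ, line ℓ → line ℓ} (hinj : ∀ ℓ, Function.Injective (σ ℓ))
    (hfix : ∀ ℓ x, σ ℓ x ≠ x) {a b : Incidence line} (hab : a ≠ b)
    (h : a.1.1 ∈ line b.1.2 ∨ b.1.1 ∈ line a.1.2) : a.shift σ ≠ b.shift σ := by
  wlog h' : a.1.1 ∈ line b.1.2 generalizing a b
  · exact (this hab.symm h.symm (h.resolve_left h')).symm
  obtain ⟨⟨p, ℓ⟩, hp⟩ := a
  obtain ⟨⟨p', ℓ'⟩, hp'⟩ := b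
  intro (heq : (σ ℓ ⟨p, hp⟩ : P) = σ ℓ' ⟨p', hp'⟩)
  -- the common value and `p` are two distinct points on both lines
  have hq : (σ ℓ ⟨p, hp⟩ : P) ≠ p := fun h => hfix ℓ _ (Subtype.ext h)
  have hq' : (σ ℓ ⟨p, hp⟩ : P) ∈ line ℓ' := heq ▸ (σ ℓ' ⟨p', hp'⟩).2
  obtain rfl : ℓ = ℓ' := hL hq (σ ℓ ⟨p, hp⟩).2 hp hq' h'
  obtain rfl : p = p' := congrArg Subtype.val (hinj ℓ (Subtype.ext heq))
  exact hab rfl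

/- If two incidences of the triple share a point `p` and two share a line `ℓ`, then `p ∈ ℓ` and
every incidence of the triple has point `p` or line `ℓ`. -/
theorem Incidence.mem_or_mem_of_not_pairwise {x y z : Incidence line} (hxz : x ≠ z)
    (hyz : y ≠ z) (hp : x.1.1 = y.1.1 ∨ x.1.1 = z.1.1 ∨ y.1.1 = z.1.1)
    (hl : x.1.2 = y.1.2 ∨ x.1.2 = z.1.2 ∨ y.1.2 = z.1.2) :
    x.1.1 ∈ line y.1.2 ∨ y.1.1 ∈ line x.1.2 := by
  obtain ⟨⟨p, ℓ⟩, hx⟩ := x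
  obtain ⟨⟨p', ℓ'⟩, hy⟩ := y
  obtain ⟨⟨p'', ℓ''⟩, hz⟩ := z
  dsimp only at *
  rcases hp with rfl | rfl | rfl <;> rcases hl with rfl | rfl | rfl <;> simp_all

theorem Incidence.trichotomy (hL : LinesMeetInAtMostOnePoint line)
    {σ : ∀ ℓ, line ℓ → line ℓ} (hinj : ∀ ℓ, Function.Injective (σ ℓ))
    (hfix : ∀ ℓ x, σ ℓ x ≠ x) {x y z : Incidence line} (hxy : x ≠ y) (hxz : x ≠ z)
    (hyz : y ≠ z) :
    (x.1.1 ≠ y.1.1 ∧ x.1.1 ≠ z.1.1 ∧ y.1.1 ≠ z.1.1) ∨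
    (x.1.2 ≠ y.1.2 ∧ x.1.2 ≠ z.1.2 ∧ y.1.2 ≠ z.1.2) ∨
    (x.shift σ ≠ y.shift σ ∧ x.shift σ ≠ z.shift σ ∧ y.shift σ ≠ z.shift σ) := by
  by_cases hp : x.1.1 = y.1.1 ∨ x.1.1 = z.1.1 ∨ y.1.1 = z.1.1
  · by_cases hl : x.1.2 = y.1.2 ∨ x.1.2 = z.1.2 ∨ y.1.2 = z.1.2
    · refine .inr (.inr ⟨?_, ?_, ?_⟩)
      · exact shift_ne_shift hL hinj hfix hxy (mem_or_mem_of_not_pairwise hxz hyz hp hl)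
      · exact shift_ne_shift hL hinj hfix hxz
          (mem_or_mem_of_not_pairwise hxy hyz.symm (by grind) (by grind))
      · exact shift_ne_shift hL hinj hfix hyz
          (mem_or_mem_of_not_pairwise hxy.symm hxz.symm (by grind) (by grind))
    · exact .inr (.inl (by tauto))
  · exact .inl (by tauto)

theorem Incidence.card_eq_mul [Finite L] [∀ ℓ, Finite (line ℓ)] {k : ℕ}
    (hk : ∀ ℓ, Nat.card (line ℓ) = k) : Nat.card (Incidence line) = Nat.card L * k := by
  have : Fintype L := Fintype.ofFinite L
  let e : Incidence line ≃ Σ ℓ, line ℓ :=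
    { toFun := fun x => ⟨x.1.2, x.1.1, x.2⟩
      invFun := fun y => ⟨(y.2, y.1), y.2.2⟩
      left_inv := fun _ => rfl
      right_inv := fun _ => rfl }
  simp [Nat.card_congr e, Nat.card_sigma, hk]

def Incidence.code (φ : P → ι → Fin 3) (ψ : L → ι → Fin 3) (σ : ∀ ℓ, line ℓ → line ℓ)
    (x : Incidence line) : Fin 3 × ι → Fin 3 :=
  fun ki => if ki.1 = 0 then φ x.1.1 ki.2 else if ki.1 = 1 then ψ x.1.2 ki.2
    else φ (x.shift σ) ki.2

theorem Incidence.code_injective {φ : P → ι → Fin 3} {ψ : L → ι → Fin 3}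
    (hφ : Function.Injective φ) (hψ : Function.Injective ψ) (σ : ∀ ℓ, line ℓ → line ℓ) :
    Function.Injective (code φ ψ σ) := fun _ _ h =>
  Subtype.ext <| Prod.ext (hφ <| funext fun i => congrFun h (0, i))
    (hψ <| funext fun i => congrFun h (1, i))

theorem Incidence.trifferentSet_range_code (hL : LinesMeetInAtMostOnePoint line)
    {φ : P → ι → Fin 3} {ψ : L → ι → Fin 3} (hφ : Function.Injective φ)
    (hψ : Function.Injective ψ) (hφt : TrifferentSet (Set.range φ))
    (hψt : TrifferentSet (Set.range ψ)) {σ : ∀ ℓ, line ℓ → line ℓ}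
    (hinj : ∀ ℓ, Function.Injective (σ ℓ)) (hfix : ∀ ℓ x, σ ℓ x ≠ x) :
    TrifferentSet (Set.range (code φ ψ σ)) := by
  refine trifferentSet_range_iff.mpr fun x y z hxy hxz hyz => ?_
  rcases trichotomy hL hinj hfix (ne_of_apply_ne _ hxy) (ne_of_apply_ne _ hxz)
    (ne_of_apply_ne _ hyz) with ⟨h₁, h₂, h₃⟩ | ⟨h₁, h₂, h₃⟩ | ⟨h₁, h₂, h₃⟩
  · exact hφt.exists_block hφ 0 (fun x => x.1.1) (fun _ _ => rfl) h₁ h₂ h₃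
  · exact hψt.exists_block hψ 1 (fun x => x.1.2) (fun _ _ => rfl) h₁ h₂ h₃
  · exact hφt.exists_block hφ 2 (shift σ) (fun _ _ => rfl) h₁ h₂ h₃

end IncidenceStructure

section AffinePlane

variable {F : Type*} [Field F]

theorem IsAffineLine.eq_setOf_of_mem {ℓ : Set (F × F)} (h : IsAffineLine F ℓ) {a b : F × F}
    (hab : a ≠ b) (ha : a ∈ ℓ) (hb : b ∈ ℓ) : ℓ = {p | ∃ t : F, p = a + t • (b - a)} := by
  obtain ⟨v, d, hd, rfl⟩ := h
  obtain ⟨s, rfl⟩ := ha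
  obtain ⟨u, rfl⟩ := hb
  have hus : u - s ≠ 0 := sub_ne_zero.mpr fun h => hab (by rw [h])
  have hba : v + u • d - (v + s • d) = (u - s) • d := by module
  ext p
  simp only [Set.mem_ofPred_eq, hba, smul_smul]
  constructor
  · rintro ⟨t, rfl⟩
    exact ⟨(t - s) / (u - s), by rw [div_mul_cancel₀ _ hus]; module⟩
  · rintro ⟨r, rfl⟩
    exact ⟨s + r * (u - s), by module⟩

theorem linesMeetInAtMostOnePoint_affineLine :
    LinesMeetInAtMostOnePoint (Subtype.val : {ℓ : Set (F × F) // IsAffineLine F ℓ} → _) :=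
  fun ℓ₁ ℓ₂ _ _ hab ha₁ hb₁ ha₂ hb₂ => Subtype.ext <|
    (ℓ₁.2.eq_setOf_of_mem hab ha₁ hb₁).trans (ℓ₂.2.eq_setOf_of_mem hab ha₂ hb₂).symm

theorem IsAffineLine.card_eq {ℓ : Set (F × F)} (h : IsAffineLine F ℓ) :
    Nat.card ℓ = Nat.card F := by
  obtain ⟨v, d, hd, rfl⟩ := h
  have hrange : {p | ∃ t : F, p = v + t • d} = Set.range fun t : F => v + t • d := by
    ext; simp [eq_comm]
  rw [hrange]
  exact Nat.card_range_of_injective fun t t' h => smul_left_injective F hd (add_left_cancel h)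

def slopeLine (a b : F) : Set (F × F) := {p | p.2 = a * p.1 + b}

def vertLine (c : F) : Set (F × F) := {p | p.1 = c}

theorem isAffineLine_slopeLine (a b : F) : IsAffineLine F (slopeLine a b) := by
  refine ⟨(0, b), (1, a), by simp, ?_⟩
  ext ⟨x, y⟩
  simp only [slopeLine, Set.mem_ofPred_eq, Prod.smul_mk, Prod.mk_add_mk, Prod.mk.injEq,
    smul_eq_mul]
  constructor
  · intro h
    exact ⟨x, by ring, by rw [h]; ring⟩
  · rintro ⟨t, rfl, rfl⟩
    ring

theorem isAffineLine_vertLine (c : F) : IsAffineLine F (vertLine c) := by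
  refine ⟨(c, 0), (0, 1), by simp, ?_⟩
  ext ⟨x, y⟩
  simp only [vertLine, Set.mem_ofPred_eq, Prod.smul_mk, Prod.mk_add_mk, Prod.mk.injEq,
    smul_eq_mul]
  constructor
  · rintro rfl
    exact ⟨y, by ring, by ring⟩
  · rintro ⟨t, rfl, -⟩
    ring

theorem IsAffineLine.eq_slopeLine_or_eq_vertLine {ℓ : Set (F × F)} (h : IsAffineLine F ℓ) :
    (∃ a b, ℓ = slopeLine a b) ∨ ∃ c, ℓ = vertLine c := by
  obtain ⟨v, d, hd, rfl⟩ := h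
  by_cases hd₁ : d.1 = 0
  · have hd₂ : d.2 ≠ 0 := fun h₂ => hd (Prod.ext hd₁ h₂)
    refine .inr ⟨v.1, Set.ext fun p => ⟨?_, fun hp => ⟨(p.2 - v.2) / d.2, ?_⟩⟩⟩
    · rintro ⟨t, rfl⟩
      simp [vertLine, hd₁]
    · ext
      · simp [hd₁, hp.symm]
      · simp only [Prod.snd_add, Prod.smul_snd, smul_eq_mul]
        field_simp
        ring
  · refine .inl ⟨d.2 / d.1, v.2 - d.2 / d.1 * v.1,
      Set.ext fun p => ⟨?_, fun hp => ⟨(p.1 - v.1) / d.1, ?_⟩⟩⟩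
    · rintro ⟨t, rfl⟩
      simp only [slopeLine, Set.mem_ofPred_eq, Prod.snd_add, Prod.fst_add, Prod.smul_snd,
        Prod.smul_fst, smul_eq_mul]
      field_simp
      ring
    · ext
      · simp only [Prod.fst_add, Prod.smul_fst, smul_eq_mul]
        field_simp
        ring
      · simp only [slopeLine, Set.mem_ofPred_eq] at hp
        simp only [Prod.snd_add, Prod.smul_snd, smul_eq_mul, hp]
        field_simp
        ring

theorem slopeLine_injective : Function.Injective fun ab : F × F => slopeLine ab.1 ab.2 := by
  rintro ⟨a, b⟩ ⟨a', b'⟩ (h : slopeLine a b = slopeLine a' b')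
  have h₀ : ((0 : F), b) ∈ slopeLine a' b' := h ▸ by simp [slopeLine]
  have h₁ : ((1 : F), a + b) ∈ slopeLine a' b' := h ▸ by simp [slopeLine]
  simp only [slopeLine, Set.mem_ofPred_eq] at h₀ h₁
  grind

theorem slopeLine_ne_vertLine (a b c : F) : slopeLine a b ≠ vertLine c := by
  intro h
  have : (c + 1, a * (c + 1) + b) ∈ vertLine c := h ▸ by simp [slopeLine]
  simp [vertLine] at this

theorem vertLine_injective : Function.Injective (vertLine : F → Set (F × F)) := by
  intro c c' h
  have : ((c, 0) : F × F) ∈ vertLine c' := h ▸ by simp [vertLine]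
  simpa [vertLine] using this

theorem card_affineLine [Finite F] :
    Nat.card {ℓ : Set (F × F) // IsAffineLine F ℓ} = Nat.card F ^ 2 + Nat.card F := by
  let f : (F × F) ⊕ F → {ℓ : Set (F × F) // IsAffineLine F ℓ} :=
    Sum.elim (fun ab => ⟨slopeLine ab.1 ab.2, isAffineLine_slopeLine ab.1 ab.2⟩)
      fun c => ⟨vertLine c, isAffineLine_vertLine c⟩
  have hf : f.Bijective := by
    refine ⟨?_, fun ℓ => ?_⟩
    · rintro (ab | c) (ab' | c') h <;>
        simp only [f, Sum.elim_inl, Sum.elim_inr, Subtype.mk.injEq] at h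
      · exact congrArg _ (slopeLine_injective h)
      · exact absurd h (slopeLine_ne_vertLine _ _ _)
      · exact absurd h.symm (slopeLine_ne_vertLine _ _ _)
      · exact congrArg _ (vertLine_injective h)
    · rcases ℓ.2.eq_slopeLine_or_eq_vertLine with ⟨a, b, h⟩ | ⟨c, h⟩
      · exact ⟨.inl (a, b), Subtype.ext h.symm⟩
      · exact ⟨.inr c, Subtype.ext h.symm⟩
  rw [← Nat.card_eq_of_bijective f hf, Nat.card_sum, Nat.card_prod, sq]

theorem card_incidence_affineLine [Finite F] :
    Nat.card (Incidence (Subtype.val : {ℓ : Set (F × F) // IsAffineLine F ℓ} → _)) =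
      Nat.card F ^ 3 + Nat.card F ^ 2 := by
  rw [Incidence.card_eq_mul fun ℓ => ℓ.2.card_eq, card_affineLine]
  ring

end AffinePlane

theorem incidence_code_trifferent (F : Type*) [Field F] [Fintype F] (n : ℕ)
    (φ : F × F → (Fin n → Fin 3))
    (ψ : {ℓ : Set (F × F) // IsAffineLine F ℓ} → (Fin n → Fin 3))
    (hφ : Function.Injective φ) (hψ : Function.Injective ψ)
    (hφt : TrifferentSet (Set.range φ)) (hψt : TrifferentSet (Set.range ψ))
    (σ : ∀ ℓ : {ℓ : Set (F × F) // IsAffineLine F ℓ},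
      (ℓ : Set (F × F)) ≃ (ℓ : Set (F × F)))
    (hσ : ∀ ℓ, ∀ x, σ ℓ x ≠ x) :
    TrifferentSet (Set.range fun x : {x : (F × F) × {ℓ : Set (F × F) // IsAffineLine F ℓ} //
        x.1 ∈ (x.2 : Set (F × F))} =>
      fun ki : Fin 3 × Fin n =>
        if ki.1 = 0 then φ x.1.1 ki.2
        else if ki.1 = 1 then ψ x.1.2 ki.2
        else φ ((σ x.1.2 ⟨x.1.1, x.2⟩ : Set.Elem (x.1.2 : Set (F × F))) : F × F) ki.2) ∧
    Nat.card (Set.range fun x : {x : (F × F) × {ℓ : Set (F × F) // IsAffineLine F ℓ} //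
        x.1 ∈ (x.2 : Set (F × F))} =>
      fun ki : Fin 3 × Fin n =>
        if ki.1 = 0 then φ x.1.1 ki.2
        else if ki.1 = 1 then ψ x.1.2 ki.2
        else φ ((σ x.1.2 ⟨x.1.1, x.2⟩ : Set.Elem (x.1.2 : Set (F × F))) : F × F) ki.2)
      = Fintype.card F ^ 3 + Fintype.card F ^ 2 := by
  refine ⟨Incidence.trifferentSet_range_code linesMeetInAtMostOnePoint_affineLine hφ hψ hφt hψt
    (fun ℓ => (σ ℓ).injective) hσ,
    (Nat.card_range_of_injective (Incidence.code_injective hφ hψ fun ℓ => σ ℓ)).trans ?_⟩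
  rw [card_incidence_affineLine, Nat.card_eq_fintype_card]
end

section
/- For every integer t ≥ 0 there is a constant c_t > 0 such that for all n ≥ 3^t there exists a trifferent code C ⊆ {0,1,2}^n in which every codeword has exactly 3^t coordinates equal to 2 and |C| ≥ c_t · n^((3/2)^t). -/
def Trif {ι : Type*} (C : Finset (ι → Fin 3)) : Prop :=
  ∀ x ∈ C, ∀ y ∈ C, ∀ z ∈ C, x ≠ y → x ≠ z → y ≠ z →
    ∃ i : ι, ({x i, y i, z i} : Set (Fin 3)) = Set.univ

lemma tri_univ {a b c : Fin 3} (hab : a ≠ b) (hac : a ≠ c) (hbc : b ≠ c) :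
    ({a, b, c} : Set (Fin 3)) = Set.univ := by
  apply Set.eq_univ_of_forall
  intro x
  simp only [Set.mem_insert_iff, Set.mem_singleton_iff]
  fin_cases a <;> fin_cases b <;> fin_cases c <;> fin_cases x <;> simp_all

def baseW {n : ℕ} (i : Fin n) : Fin n → Fin 3 :=
  fun j => if j < i then 1 else if j = i then 2 else 0

lemma baseW_self {n : ℕ} (i : Fin n) : baseW i i = 2 := by simp [baseW]

lemma baseW_lt {n : ℕ} {i j : Fin n} (h : j < i) : baseW i j = 1 := by
  simp [baseW, h]

lemma baseW_gt {n : ℕ} {i j : Fin n} (h : i < j) : baseW i j = 0 := by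
  simp [baseW, not_lt_of_gt h, (ne_of_gt h : j ≠ i)]

lemma baseW_inj {n : ℕ} : Function.Injective (baseW (n := n)) := by
  intro i j h
  by_contra hne
  rcases lt_or_gt_of_ne hne with hlt | hlt
  · have := congrFun h i
    rw [baseW_self, baseW_lt hlt] at this
    exact absurd this (by decide)
  · have := congrFun h j
    rw [baseW_lt hlt, baseW_self] at this
    exact absurd this (by decide)

lemma base_code (n : ℕ) :
    ∃ C : Finset (Fin n → Fin 3), Trif C ∧ C.card = n ∧
      ∀ x ∈ C, (Finset.univ.filter fun j => x j = 2).card = 1 := by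
  classical
  refine ⟨Finset.univ.image baseW, ?_, ?_, ?_⟩
  · intro x hx y hy z hz hxy hxz hyz
    obtain ⟨a, -, rfl⟩ := Finset.mem_image.mp hx
    obtain ⟨b, -, rfl⟩ := Finset.mem_image.mp hy
    obtain ⟨c, -, rfl⟩ := Finset.mem_image.mp hz
    have hab : a ≠ b := fun h => hxy (congrArg _ h)
    have hac : a ≠ c := fun h => hxz (congrArg _ h)
    have hbc : b ≠ c := fun h => hyz (congrArg _ h)
    rcases lt_trichotomy a b with h1 | h1 | h1
    · rcases lt_trichotomy b c with h2 | h2 | h2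
      · refine ⟨b, ?_⟩
        rw [baseW_gt h1, baseW_self, baseW_lt h2]
        exact tri_univ (by decide) (by decide) (by decide)
      · exact absurd h2 hbc
      · rcases lt_trichotomy a c with h3 | h3 | h3
        · refine ⟨c, ?_⟩
          rw [baseW_gt h3, baseW_lt h2, baseW_self]
          exact tri_univ (by decide) (by decide) (by decide)
        · exact absurd h3 hac
        · refine ⟨a, ?_⟩
          rw [baseW_self, baseW_lt h1, baseW_gt h3]
          exact tri_univ (by decide) (by decide) (by decide)
    · exact absurd h1 hab
    · rcases lt_trichotomy a c with h2 | h2 | h2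
      · refine ⟨a, ?_⟩
        rw [baseW_self, baseW_gt h1, baseW_lt h2]
        exact tri_univ (by decide) (by decide) (by decide)
      · exact absurd h2 hac
      · rcases lt_trichotomy b c with h3 | h3 | h3
        · refine ⟨c, ?_⟩
          rw [baseW_lt h2, baseW_gt h3, baseW_self]
          exact tri_univ (by decide) (by decide) (by decide)
        · exact absurd h3 hbc
        · refine ⟨b, ?_⟩
          rw [baseW_lt h1, baseW_self, baseW_gt h3]
          exact tri_univ (by decide) (by decide) (by decide)
  · rw [Finset.card_image_of_injective _ baseW_inj, Finset.card_univ, Fintype.card_fin]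
  · intro x hx
    obtain ⟨a, -, rfl⟩ := Finset.mem_image.mp hx
    have : (Finset.univ.filter fun j => baseW a j = 2) = {a} := by
      ext j
      simp only [Finset.mem_filter, Finset.mem_univ, true_and, Finset.mem_singleton]
      constructor
      · intro hj
        by_contra hne
        rcases lt_or_gt_of_ne hne with h | h
        · rw [baseW_lt h] at hj; exact absurd hj (by decide)
        · rw [baseW_gt h] at hj; exact absurd hj (by decide)
      · rintro rfl; exact baseW_self _
    rw [this, Finset.card_singleton]

lemma count_elim {ι κ : Type*} [Fintype ι] [Fintype κ] [DecidableEq ι] [DecidableEq κ]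
    (u : ι → Fin 3) (v : κ → Fin 3) :
    (Finset.univ.filter fun i : ι ⊕ κ => Sum.elim u v i = 2).card
      = (Finset.univ.filter fun i => u i = 2).card
        + (Finset.univ.filter fun j => v j = 2).card := by
  classical
  rw [← Fintype.card_subtype, ← Fintype.card_subtype, ← Fintype.card_subtype,
    ← Fintype.card_sum]
  exact Fintype.card_congr Equiv.subtypeSum

lemma K1 {R : Type*} [CommRing R] {x1 d1 b1 x2 d2 b2 x3 d3 b3 : R}
    (hab : (x1, d1, b1) ≠ (x2, d2, b2)) (hac : (x1, d1, b1) ≠ (x3, d3, b3))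
    (hp : ((x1, d1 * x1 + b1) : R × R) = (x2, d2 * x2 + b2))
    (hl : ((d1, b1) : R × R) = (d3, b3)) :
    (((x1 + 1, d1 * (x1 + 1) + b1) : R × R) ≠ (x2 + 1, d2 * (x2 + 1) + b2))
    ∧ (((x1 + 1, d1 * (x1 + 1) + b1) : R × R) ≠ (x3 + 1, d3 * (x3 + 1) + b3))
    ∧ (((x2 + 1, d2 * (x2 + 1) + b2) : R × R) ≠ (x3 + 1, d3 * (x3 + 1) + b3)) := by
  rw [Prod.mk.injEq] at hp hl
  obtain ⟨hx, hy⟩ := hp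
  obtain ⟨hd, hb⟩ := hl
  subst hx hd hb
  have hdne : d1 ≠ d2 := by
    intro h
    subst h
    have hbb : b1 = b2 := by linear_combination hy
    exact hab (by rw [hbb])
  have hxne : x1 ≠ x3 := by
    intro h
    exact hac (by rw [h])
  refine ⟨?_, ?_, ?_⟩
  · intro h
    rw [Prod.mk.injEq] at h
    exact hdne (by linear_combination h.2 - hy)
  · intro h
    rw [Prod.mk.injEq] at h
    exact hxne (by linear_combination h.1)
  · intro h
    rw [Prod.mk.injEq] at h
    exact hxne (by linear_combination h.1)

lemma transfer {ι : Type*} [Fintype ι] [DecidableEq ι] {n k : ℕ} (ρ : ι → Fin n)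
    (hρ : Function.Injective ρ) (C : Finset (ι → Fin 3)) (hC : Trif C)
    (hk : ∀ w ∈ C, (Finset.univ.filter fun i => w i = 2).card = k) :
    ∃ D : Finset (Fin n → Fin 3), Trifferent D ∧ D.card = C.card ∧
      ∀ x ∈ D, (Finset.univ.filter fun j => x j = 2).card = k := by
  classical
  set F : (ι → Fin 3) → (Fin n → Fin 3) :=
    fun w j => if h : ∃ i, ρ i = j then w h.choose else 0 with hF
  have key : ∀ (w : ι → Fin 3) (i : ι), F w (ρ i) = w i := by
    intro w i
    have h : ∃ i', ρ i' = ρ i := ⟨i, rfl⟩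
    have : h.choose = i := hρ h.choose_spec
    simp only [hF, dif_pos h, this]
  have Finj : Function.Injective F := by
    intro w w' h
    funext i
    have := congrFun h (ρ i)
    rwa [key, key] at this
  refine ⟨C.image F, ?_, Finset.card_image_of_injective _ Finj, ?_⟩
  · intro x hx y hy z hz hxy hxz hyz
    obtain ⟨u, hu, rfl⟩ := Finset.mem_image.mp hx
    obtain ⟨v, hv, rfl⟩ := Finset.mem_image.mp hy
    obtain ⟨w, hw, rfl⟩ := Finset.mem_image.mp hz
    obtain ⟨i, hi⟩ := hC u hu v hv w hw (fun h => hxy (congrArg F h))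
      (fun h => hxz (congrArg F h)) (fun h => hyz (congrArg F h))
    exact ⟨ρ i, by rw [key, key, key]; exact hi⟩
  · intro x hx
    obtain ⟨w, hw, rfl⟩ := Finset.mem_image.mp hx
    rw [← hk w hw]
    have hset : (Finset.univ.filter fun j => F w j = 2)
        = (Finset.univ.filter fun i => w i = 2).image ρ := by
      ext j
      simp only [Finset.mem_filter, Finset.mem_univ, true_and, Finset.mem_image]
      constructor
      · intro hj
        have hj2 : F w j = 2 := hj
        by_cases h : ∃ i, ρ i = j
        · refine ⟨h.choose, ?_, h.choose_spec⟩
          rwa [show F w j = w h.choose from dif_pos h] at hj2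
        · rw [show F w j = 0 from dif_neg h] at hj2
          exact absurd hj2 (by decide)
      · rintro ⟨i, hi, rfl⟩
        rw [key]; exact hi
    rw [hset, Finset.card_image_of_injective _ hρ]

lemma step_code {q n' : ℕ} (hq : q.Prime) (C' : Finset (Fin n' → Fin 3)) (hC' : Trif C')
    (hcard : q * q ≤ C'.card) :
    ∃ D : Finset ((Fin n' ⊕ (Fin n' ⊕ Fin n')) → Fin 3), Trif D ∧ D.card = q ^ 3 ∧
      ∀ x ∈ D, ∃ u ∈ C', ∃ v ∈ C', ∃ w ∈ C', x = Sum.elim u (Sum.elim v w) := by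
  classical
  haveI : Fact q.Prime := ⟨hq⟩
  haveI : NeZero q := ⟨hq.ne_zero⟩
  have hcard2 : Fintype.card (ZMod q × ZMod q) ≤ Fintype.card ↥C' := by
    rw [Fintype.card_prod, ZMod.card, Fintype.card_coe]; exact hcard
  obtain ⟨ε⟩ := Function.Embedding.nonempty_of_card_le hcard2
  set φ : ZMod q × ZMod q → (Fin n' → Fin 3) := fun p => (ε p : Fin n' → Fin 3) with hφ
  have hφi : Function.Injective φ := fun p p' h => ε.injective (Subtype.ext h)
  have hφm : ∀ p, φ p ∈ C' := fun p => (ε p).2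
  set g : ZMod q × ZMod q × ZMod q → ((Fin n' ⊕ (Fin n' ⊕ Fin n')) → Fin 3) :=
    fun a => Sum.elim (φ (a.1, a.2.1 * a.1 + a.2.2))
      (Sum.elim (φ (a.2.1, a.2.2)) (φ (a.1 + 1, a.2.1 * (a.1 + 1) + a.2.2))) with hg
  have ginj : Function.Injective g := by
    rintro ⟨x1, d1, b1⟩ ⟨x2, d2, b2⟩ h
    have h2 := hφi (funext fun i => congrFun h (Sum.inr (Sum.inl i)) :
      φ (d1, b1) = φ (d2, b2))
    have h1 := hφi (funext fun i => congrFun h (Sum.inl i) :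
      φ (x1, d1 * x1 + b1) = φ (x2, d2 * x2 + b2))
    rw [Prod.mk.injEq] at h2 h1
    simp only [Prod.mk.injEq]
    exact ⟨h1.1, h2.1, h2.2⟩
  refine ⟨Finset.univ.image g, ?_, ?_, ?_⟩
  · intro x hx y hy z hz hxy hxz hyz
    obtain ⟨a1, -, rfl⟩ := Finset.mem_image.mp hx
    obtain ⟨a2, -, rfl⟩ := Finset.mem_image.mp hy
    obtain ⟨a3, -, rfl⟩ := Finset.mem_image.mp hz
    obtain ⟨x1, d1, b1⟩ := a1
    obtain ⟨x2, d2, b2⟩ := a2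
    obtain ⟨x3, d3, b3⟩ := a3
    have ha12 : ((x1,d1,b1) : ZMod q × ZMod q × ZMod q) ≠ (x2,d2,b2) :=
      fun h => hxy (congrArg g h)
    have ha13 : ((x1,d1,b1) : ZMod q × ZMod q × ZMod q) ≠ (x3,d3,b3) :=
      fun h => hxz (congrArg g h)
    have ha23 : ((x2,d2,b2) : ZMod q × ZMod q × ZMod q) ≠ (x3,d3,b3) :=
      fun h => hyz (congrArg g h)
    by_cases hP : ((x1, d1*x1+b1) : ZMod q × ZMod q) ≠ (x2, d2*x2+b2)
        ∧ ((x1, d1*x1+b1) : ZMod q × ZMod q) ≠ (x3, d3*x3+b3)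
        ∧ ((x2, d2*x2+b2) : ZMod q × ZMod q) ≠ (x3, d3*x3+b3)
    · obtain ⟨i, hi⟩ := hC' _ (hφm (x1, d1*x1+b1)) _ (hφm (x2, d2*x2+b2)) _
        (hφm (x3, d3*x3+b3))
        (fun h => hP.1 (hφi h)) (fun h => hP.2.1 (hφi h)) (fun h => hP.2.2 (hφi h))
      exact ⟨Sum.inl i, hi⟩
    by_cases hL : ((d1,b1) : ZMod q × ZMod q) ≠ (d2,b2)
        ∧ ((d1,b1) : ZMod q × ZMod q) ≠ (d3,b3)
        ∧ ((d2,b2) : ZMod q × ZMod q) ≠ (d3,b3)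
    · obtain ⟨i, hi⟩ := hC' _ (hφm (d1,b1)) _ (hφm (d2,b2)) _ (hφm (d3,b3))
        (fun h => hL.1 (hφi h)) (fun h => hL.2.1 (hφi h)) (fun h => hL.2.2 (hφi h))
      exact ⟨Sum.inr (Sum.inl i), hi⟩
    simp only [ne_eq, not_and_or, not_not] at hP hL
    have key : (((x1+1, d1*(x1+1)+b1) : ZMod q × ZMod q) ≠ (x2+1, d2*(x2+1)+b2))
        ∧ (((x1+1, d1*(x1+1)+b1) : ZMod q × ZMod q) ≠ (x3+1, d3*(x3+1)+b3))
        ∧ (((x2+1, d2*(x2+1)+b2) : ZMod q × ZMod q) ≠ (x3+1, d3*(x3+1)+b3)) := by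
      rcases hP with hp | hp | hp <;> rcases hL with hl | hl | hl
      · rw [Prod.mk.injEq] at hp hl
        exact absurd (by simp only [Prod.mk.injEq]; exact ⟨hp.1, hl.1, hl.2⟩) ha12
      · exact K1 ha12 ha13 hp hl
      · obtain ⟨h1, h2, h3⟩ := K1 ha12.symm ha23 hp.symm hl
        exact ⟨h1.symm, h3, h2⟩
      · obtain ⟨h1, h2, h3⟩ := K1 ha13 ha12 hp hl
        exact ⟨h2, h1, h3.symm⟩
      · rw [Prod.mk.injEq] at hp hl
        exact absurd (by simp only [Prod.mk.injEq]; exact ⟨hp.1, hl.1, hl.2⟩) ha13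
      · obtain ⟨h1, h2, h3⟩ := K1 ha13.symm ha23.symm hp.symm hl.symm
        exact ⟨h3, h1.symm, h2.symm⟩
      · obtain ⟨h1, h2, h3⟩ := K1 ha23 ha12.symm hp hl.symm
        exact ⟨h2.symm, h3.symm, h1⟩
      · obtain ⟨h1, h2, h3⟩ := K1 ha23.symm ha13.symm hp.symm hl.symm
        exact ⟨h3.symm, h2.symm, h1.symm⟩
      · rw [Prod.mk.injEq] at hp hl
        exact absurd (by simp only [Prod.mk.injEq]; exact ⟨hp.1, hl.1, hl.2⟩) ha23
    obtain ⟨k1, k2, k3⟩ := key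
    obtain ⟨i, hi⟩ := hC' _ (hφm (x1+1, d1*(x1+1)+b1)) _ (hφm (x2+1, d2*(x2+1)+b2)) _
      (hφm (x3+1, d3*(x3+1)+b3))
      (fun h => k1 (hφi h)) (fun h => k2 (hφi h)) (fun h => k3 (hφi h))
    exact ⟨Sum.inr (Sum.inr i), hi⟩
  · rw [Finset.card_image_of_injective _ ginj, Finset.card_univ, Fintype.card_prod,
      Fintype.card_prod, ZMod.card]
    ring
  · intro x hx
    obtain ⟨a, -, rfl⟩ := Finset.mem_image.mp hx
    exact ⟨_, hφm _, _, hφm _, _, hφm _, rfl⟩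


theorem lower_bound_power_of_three_bounded (t : ℕ) :
    ∃ c : ℝ, 0 < c ∧ ∀ n : ℕ, 3 ^ t ≤ n →
      ∃ C : Finset (Fin n → Fin 3), Trifferent C ∧
        (∀ x ∈ C, (Finset.univ.filter fun i => x i = 2).card = 3 ^ t) ∧
        c * (n : ℝ) ^ (((3 : ℝ) / 2) ^ t) ≤ (C.card : ℝ) := by
  induction t with
  | zero =>
    refine ⟨1, one_pos, fun n hn => ?_⟩
    obtain ⟨C, hT, hcard, hcount⟩ := base_code n
    refine ⟨C, hT, by simpa using hcount, ?_⟩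
    rw [pow_zero, Real.rpow_one, one_mul, hcard]
  | succ t ih =>
    obtain ⟨c', hc', H⟩ := ih
    set E : ℝ := ((3:ℝ)/2)^(t+1) with hE
    have hEpos : 0 < E := by positivity
    set N : ℕ := max (3^(t+1)) (max 9 (⌈36/c'⌉₊ + 1)) with hN
    have hNpos : 0 < N := lt_of_lt_of_le (by positivity) (le_max_left _ _)
    set c₀ : ℝ := c' ^ ((3:ℝ)/2) / (8 * 9 ^ E) with hc₀
    have h9E : (0:ℝ) < 9 ^ E := Real.rpow_pos_of_pos (by norm_num) _
    have hc₀pos : 0 < c₀ :=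
      div_pos (Real.rpow_pos_of_pos hc' _) (by positivity)
    have hNE : (0:ℝ) < (N:ℝ) ^ E := Real.rpow_pos_of_pos (by exact_mod_cast hNpos) _
    refine ⟨min c₀ ((N:ℝ)^E)⁻¹, lt_min hc₀pos (inv_pos.mpr hNE), ?_⟩
    intro n hn
    by_cases hbig : N ≤ n
    · -- main construction
      have h9n : 9 ≤ n := le_trans (le_trans (le_max_left _ _) (le_max_right _ _)) hbig
      have hceil : (36 / c' : ℝ) ≤ (n:ℝ) := by
        have h1 : ⌈36/c'⌉₊ ≤ n := by
          have := le_trans (le_trans (le_max_right 9 _) (le_max_right (3^(t+1)) _)) hbig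
          omega
        exact le_trans (Nat.le_ceil _) (by exact_mod_cast h1)
      set n' := n / 3 with hn'
      have h3t : 3 ^ t ≤ n' := by
        rw [hn', Nat.le_div_iff_mul_le (by norm_num)]
        calc 3 ^ t * 3 = 3 ^ (t+1) := (pow_succ 3 t).symm
        _ ≤ n := hn
      obtain ⟨C', hC'T, hC'cnt, hC'size⟩ := H n' h3t
      have hC'' : Trif C' := hC'T
      have hn9 : (n:ℝ)/9 ≤ (n':ℝ) := by
        rw [div_le_iff₀ (by norm_num : (0:ℝ) < 9)]
        have h2 : n ≤ n' * 9 := by omega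
        exact_mod_cast h2
      have h1n9 : (1:ℝ) ≤ (n:ℝ)/9 := by
        rw [le_div_iff₀ (by norm_num)]
        have : (9:ℝ) ≤ (n:ℝ) := by exact_mod_cast h9n
        linarith
      have hE1 : (1:ℝ) ≤ ((3:ℝ)/2)^t := one_le_pow₀ (by norm_num)
      have hchain : c' * ((n:ℝ)/9) ^ (((3:ℝ)/2)^t) ≤ (C'.card : ℝ) :=
        le_trans (mul_le_mul_of_nonneg_left
          (Real.rpow_le_rpow (by positivity) hn9 (by positivity)) hc'.le) hC'size
      have hm4 : (4:ℝ) ≤ (C'.card:ℝ) := by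
        refine le_trans ?_ hchain
        have hx : (n:ℝ)/9 ≤ ((n:ℝ)/9) ^ (((3:ℝ)/2)^t) := by
          nth_rewrite 1 [← Real.rpow_one ((n:ℝ)/9)]
          exact Real.rpow_le_rpow_of_exponent_le h1n9 hE1
        have h4 : (4:ℝ) ≤ c' * ((n:ℝ)/9) := by
          rw [div_le_iff₀ hc'] at hceil
          have : c' * ((n:ℝ)/9) = (n:ℝ) * c' / 9 := by ring
          rw [this]
          linarith
        exact le_trans h4 (mul_le_mul_of_nonneg_left hx hc'.le)
      have hm4' : 4 ≤ C'.card := by exact_mod_cast hm4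
      have hs2 : 2 ≤ Nat.sqrt C'.card := by
        rw [Nat.le_sqrt]
        omega
      obtain ⟨qp, hqP, hql, hqh⟩ :=
        Nat.exists_prime_lt_and_le_two_mul (Nat.sqrt C'.card / 2) (by omega)
      have hqs : qp ≤ Nat.sqrt C'.card := le_trans hqh (by omega)
      have hq2 : qp * qp ≤ C'.card :=
        le_trans (Nat.mul_le_mul hqs hqs) (Nat.sqrt_le C'.card)
      obtain ⟨D0, hD0T, hD0card, hD0w⟩ := step_code hqP C' hC'' hq2
      have hD0cnt : ∀ w ∈ D0, (Finset.univ.filter fun i => w i = 2).card = 3^(t+1) := by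
        intro w hw
        obtain ⟨u, hu, v, hv, w', hw', rfl⟩ := hD0w w hw
        rw [count_elim, count_elim, hC'cnt u hu, hC'cnt v hv, hC'cnt w' hw', pow_succ]
        ring
      have hcard3 : Fintype.card (Fin n' ⊕ (Fin n' ⊕ Fin n')) ≤ Fintype.card (Fin n) := by
        simp only [Fintype.card_sum, Fintype.card_fin]
        omega
      obtain ⟨ρ⟩ := Function.Embedding.nonempty_of_card_le hcard3
      obtain ⟨D, hDT, hDcard, hDk⟩ := transfer ρ ρ.injective D0 hD0T hD0cnt
      refine ⟨D, hDT, hDk, ?_⟩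
      rw [hDcard, hD0card]
      push_cast
      -- goal: min c₀ (↑N ^ E)⁻¹ * ↑n ^ E ≤ ↑qp ^ 3
      have hsqrtlt : Real.sqrt (C'.card) < 2 * (qp:ℝ) := by
        have h1 : (C'.card:ℝ) < ((Nat.sqrt C'.card + 1 : ℕ):ℝ)^2 := by
          exact_mod_cast Nat.lt_succ_sqrt' C'.card
        have h2 : ((Nat.sqrt C'.card + 1 : ℕ):ℝ) ≤ 2 * (qp:ℝ) := by
          have : Nat.sqrt C'.card + 1 ≤ 2 * qp := by omega
          exact_mod_cast this
        have h3 := (Real.sqrt_lt' (by positivity : (0:ℝ) < ((Nat.sqrt C'.card + 1 : ℕ):ℝ))).mpr h1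
        linarith
      have hB : (Real.sqrt (C'.card) / 2)^3 ≤ (qp:ℝ)^3 :=
        pow_le_pow_left₀ (by positivity) (by linarith) 3
      have hsqrt3 : (Real.sqrt (C'.card))^3 = (C'.card:ℝ) ^ ((3:ℝ)/2) := by
        rw [Real.sqrt_eq_rpow, ← Real.rpow_natCast ((C'.card:ℝ) ^ ((1:ℝ)/2)) 3,
          ← Real.rpow_mul (by positivity)]
        norm_num
      have hA : c₀ * (n:ℝ)^E * 8 ≤ (Real.sqrt (C'.card))^3 := by
        rw [hsqrt3]
        have step1 : (c' * ((n:ℝ)/9) ^ (((3:ℝ)/2)^t)) ^ ((3:ℝ)/2)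
            ≤ (C'.card:ℝ) ^ ((3:ℝ)/2) :=
          Real.rpow_le_rpow (by positivity) hchain (by norm_num)
        have step2 : (c' * ((n:ℝ)/9) ^ (((3:ℝ)/2)^t)) ^ ((3:ℝ)/2)
            = c' ^ ((3:ℝ)/2) * ((n:ℝ)/9) ^ E := by
          rw [Real.mul_rpow hc'.le (by positivity), ← Real.rpow_mul (by positivity)]
          rw [hE, pow_succ]
        have step3 : ((n:ℝ)/9) ^ E = (n:ℝ)^E / 9^E :=
          Real.div_rpow (by positivity) (by norm_num) E
        have step4 : c₀ * (n:ℝ)^E * 8 = c' ^ ((3:ℝ)/2) * ((n:ℝ)^E / 9^E) := by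
          rw [hc₀]
          field_simp
        rw [step4, ← step3, ← step2]
        exact step1
      have hC1 : min c₀ ((N:ℝ)^E)⁻¹ * (n:ℝ)^E ≤ c₀ * (n:ℝ)^E :=
        mul_le_mul_of_nonneg_right (min_le_left _ _) (by positivity)
      have hC2 : (Real.sqrt (C'.card) / 2)^3 = (Real.sqrt (C'.card))^3 / 8 := by ring
      linarith
    · -- small n : singleton code
      push_neg at hbig
      have hKn : 3^(t+1) ≤ n := hn
      have hsingle : Trif ({fun _ => 2} : Finset (Fin (3^(t+1)) → Fin 3)) := by
        intro x hx y hy z hz hxy hxz hyz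
        rw [Finset.mem_singleton] at hx hy
        exact absurd (hx.trans hy.symm) hxy
      have hcnt : ∀ w ∈ ({fun _ => 2} : Finset (Fin (3^(t+1)) → Fin 3)),
          (Finset.univ.filter fun i => w i = 2).card = 3^(t+1) := by
        intro w hw
        rw [Finset.mem_singleton] at hw
        subst hw
        simp
      obtain ⟨D, hDT, hDcard, hDk⟩ :=
        transfer (Fin.castLE hKn) (Fin.castLE_injective hKn) _ hsingle hcnt
      refine ⟨D, hDT, hDk, ?_⟩
      rw [hDcard, Finset.card_singleton]
      have h1 : min c₀ ((N:ℝ)^E)⁻¹ * (n:ℝ)^E ≤ ((N:ℝ)^E)⁻¹ * (N:ℝ)^E := by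
        refine mul_le_mul (min_le_right _ _)
          (Real.rpow_le_rpow (by positivity) (by exact_mod_cast hbig.le) hEpos.le)
          (by positivity) (by positivity)
      rw [inv_mul_cancel₀ (ne_of_gt hNE)] at h1
      simpa using h1
end
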